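/- If Y has the χ₃ distribution (density (√(2/π))·y²·e^{-y²/2} on y > 0) and U is uniform on [-1,1], with Y and U independent, then X = YU has the standard normal distribution. -/

import Mathlib

/-!
Given `Y = y`, the product `X = yU` is uniform on `[-y, y]`, so `(Y, X)` has joint density
`f(y) / (2y)` on `{|x| ≤ y}`, where `f` is the χ₃ density. Since `f(y) = 2 y² φ(y)` with `φ` the
standard Gaussian density, this joint density is `y φ(y) = -φ'(y)`, and integrating out `y` over
`[|x|, ∞)` leaves `φ(|x|) = φ(x)`.
-/

open MeasureTheory ProbabilityTheory

noncomputable def chi3 : Measure ℝ :=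
  volume.withDensity (fun y =>
    ENNReal.ofReal (if 0 < y then Real.sqrt (2 / Real.pi) * y ^ 2 * Real.exp (-y ^ 2 / 2) else 0))

noncomputable def unif : Measure ℝ := (2 : ENNReal)⁻¹ • volume.restrict (Set.Icc (-1 : ℝ) 1)

open Real Set Filter Function
open scoped NNReal ENNReal

namespace ProbabilityTheory

lemma hasDerivAt_gaussianPDFReal (μ : ℝ) (v : ℝ≥0) (x : ℝ) :
    HasDerivAt (gaussianPDFReal μ v) (-((x - μ) / v * gaussianPDFReal μ v x)) x := by
  have hexponent : HasDerivAt (fun x => -(x - μ) ^ 2 / (2 * v)) (-((x - μ) / v)) x :=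
    ((((hasDerivAt_id x).sub_const μ).pow 2).neg.div_const _).congr_deriv
      (by simp only [Nat.cast_ofNat, id_eq, Nat.add_one_sub_one, pow_one, mul_one]; ring)
  rw [gaussianPDFReal_def]
  exact (hexponent.exp.const_mul _).congr_deriv (by ring)

lemma tendsto_gaussianPDFReal_atTop (μ : ℝ) {v : ℝ≥0} (hv : v ≠ 0) :
    Tendsto (gaussianPDFReal μ v) atTop (nhds 0) := by
  have hexponent : Tendsto (fun x : ℝ => -(x - μ) ^ 2 / (2 * v)) atTop atBot :=
    (tendsto_neg_atTop_atBot.comp ((tendsto_pow_atTop two_ne_zero).comp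
      (tendsto_atTop_add_const_right _ (-μ) tendsto_id))).atBot_div_const (by positivity)
  simpa [gaussianPDFReal_def] using (tendsto_exp_atBot.comp hexponent).const_mul (√(2 * π * v))⁻¹

lemma lintegral_Ioi_sub_div_mul_gaussianPDFReal (μ : ℝ) {v : ℝ≥0} (hv : v ≠ 0) {a : ℝ}
    (ha : μ ≤ a) :
    ∫⁻ y in Ioi a, ENNReal.ofReal ((y - μ) / v * gaussianPDFReal μ v y) = gaussianPDF μ v a := by
  have hderiv : ∀ y ∈ Ici a, HasDerivAt (fun y => -gaussianPDFReal μ v y)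
      ((y - μ) / v * gaussianPDFReal μ v y) y := fun y _ =>
    (hasDerivAt_gaussianPDFReal μ v y).neg.congr_deriv (neg_neg _)
  have hnonneg : ∀ y ∈ Ioi a, 0 ≤ (y - μ) / v * gaussianPDFReal μ v y := fun y hy =>
    mul_nonneg (div_nonneg (by linarith [hy.out]) v.2) (gaussianPDFReal_nonneg μ v y)
  have htend : Tendsto (fun y => -gaussianPDFReal μ v y) atTop (nhds 0) := by
    simpa using (tendsto_gaussianPDFReal_atTop μ hv).neg
  rw [← ofReal_integral_eq_lintegral_ofReal
      (integrableOn_Ioi_deriv_of_nonneg' hderiv hnonneg htend)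
      ((ae_restrict_iff' measurableSet_Ioi).mpr (.of_forall hnonneg)),
    integral_Ioi_of_hasDerivAt_of_nonneg' hderiv hnonneg htend, zero_sub, neg_neg, gaussianPDF]

end ProbabilityTheory

lemma MeasureTheory.Measure.mconv_apply {M : Type*} [Monoid M] [MeasurableSpace M]
    [MeasurableMul₂ M] (μ ν : Measure M) [SFinite ν] {s : Set M} (hs : MeasurableSet s) :
    (μ ∗ₘ ν) s = ∫⁻ x, ν ((x * ·) ⁻¹' s) ∂μ := by
  rw [Measure.mconv, Measure.map_apply measurable_mul hs, Measure.prod_apply (measurable_mul hs)]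
  rfl

instance : IsProbabilityMeasure unif :=
  ⟨by simp [unif, one_add_one_eq_two, ENNReal.inv_mul_cancel]⟩

lemma unif_preimage_const_mul {y : ℝ} (hy : 0 < y) (s : Set ℝ) :
    unif ((y * ·) ⁻¹' s) = ENNReal.ofReal (2 * y)⁻¹ * volume (s ∩ Icc (-y) y) := by
  have hIcc : Icc (-1 : ℝ) 1 = (y * ·) ⁻¹' Icc (-y) y := by
    rw [preimage_const_mul_Icc₀ _ _ hy, neg_div, div_self hy.ne']
  rw [unif, Measure.smul_apply, smul_eq_mul, Measure.restrict_apply' measurableSet_Icc, hIcc,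
    ← preimage_inter, volume_preimage_mul_left hy.ne', abs_of_pos (inv_pos.mpr hy), ← mul_assoc,
    mul_inv, ENNReal.ofReal_mul (by norm_num), ENNReal.ofReal_inv_of_pos two_pos,
    ENNReal.ofReal_ofNat]

noncomputable def chi3PDFReal (y : ℝ) : ℝ :=
  if 0 < y then 2 * y ^ 2 * gaussianPDFReal 0 1 y else 0

lemma measurable_chi3PDFReal : Measurable chi3PDFReal :=
  Measurable.ite measurableSet_Ioi (by fun_prop) measurable_const

lemma chi3_eq_withDensity :
    chi3 = volume.withDensity fun y => ENNReal.ofReal (chi3PDFReal y) := by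
  have hconst : √(2 / π) = 2 * (√(2 * π))⁻¹ := by
    have : √(2 / π) * √(2 * π) = 2 := by
      rw [← sqrt_mul (by positivity), show 2 / π * (2 * π) = 2 ^ 2 by field_simp,
        sqrt_sq zero_le_two]
    field_simp
    linarith
  unfold chi3 chi3PDFReal
  simp_rw [gaussianPDFReal, hconst]
  congr! 4
  simp only [NNReal.coe_one, mul_one, sub_zero]
  ring

instance : SigmaFinite chi3 := by
  rw [chi3]
  infer_instance

/-- The joint density of `(Y, Y * U)`: `f(y) / (2y)` on `|x| ≤ y`, with `f` the χ₃ density. -/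
noncomputable def chi3UnifJointDensity (y x : ℝ) : ℝ≥0∞ :=
  (Icc (-y) y).indicator (fun _ => ENNReal.ofReal (y * gaussianPDFReal 0 1 y)) x

lemma measurable_chi3UnifJointDensity : Measurable (uncurry chi3UnifJointDensity) := by
  have hset : MeasurableSet {p : ℝ × ℝ | p.2 ∈ Icc (-p.1) p.1} :=
    (measurableSet_le measurable_fst.neg measurable_snd).inter
      (measurableSet_le measurable_snd measurable_fst)
  exact (Measurable.ennreal_ofReal (by fun_prop)).indicator hset

lemma chi3PDFReal_mul_unif_preimage_const_mul (y : ℝ) (s : Set ℝ) :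
    ENNReal.ofReal (chi3PDFReal y) * unif ((y * ·) ⁻¹' s) =
      ∫⁻ x in s, chi3UnifJointDensity y x := by
  rcases lt_or_ge 0 y with hy_pos | hy_nonpos
  · unfold chi3UnifJointDensity
    rw [chi3PDFReal, if_pos hy_pos, unif_preimage_const_mul hy_pos,
      lintegral_indicator_const measurableSet_Icc, Measure.restrict_apply measurableSet_Icc,
      inter_comm, ← mul_assoc,
      ← ENNReal.ofReal_mul (mul_nonneg (by positivity) (gaussianPDFReal_nonneg 0 1 y))]
    congr 2
    field_simp
  · have hdensity : ENNReal.ofReal (y * gaussianPDFReal 0 1 y) = 0 :=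
      ENNReal.ofReal_of_nonpos
        (mul_nonpos_of_nonpos_of_nonneg hy_nonpos (gaussianPDFReal_nonneg 0 1 y))
    simp [chi3PDFReal, hy_nonpos.not_gt, chi3UnifJointDensity, hdensity]

lemma lintegral_chi3UnifJointDensity (x : ℝ) :
    ∫⁻ y, chi3UnifJointDensity y x = gaussianPDF 0 1 x := by
  have hindicator : (fun y => chi3UnifJointDensity y x) =
      (Ici |x|).indicator fun y => ENNReal.ofReal (y * gaussianPDFReal 0 1 y) := by
    ext y
    simp [chi3UnifJointDensity, indicator_apply, ← abs_le]
  have htail := lintegral_Ioi_sub_div_mul_gaussianPDFReal 0 one_ne_zero (abs_nonneg x)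
  simp only [sub_zero, NNReal.coe_one, div_one] at htail
  rw [hindicator, lintegral_indicator measurableSet_Ici, ← restrict_Ioi_eq_restrict_Ici, htail]
  simp only [gaussianPDF, gaussianPDFReal, sub_zero, sq_abs]

theorem chi3_mconv_unif : chi3 ∗ₘ unif = gaussianReal 0 1 := by
  ext s hs
  calc (chi3 ∗ₘ unif) s = ∫⁻ y, ENNReal.ofReal (chi3PDFReal y) * unif ((y * ·) ⁻¹' s) := by
        rw [Measure.mconv_apply _ _ hs, chi3_eq_withDensity]
        exact lintegral_withDensity_eq_lintegral_mul _ measurable_chi3PDFReal.ennreal_ofReal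
          (measurable_measure_prodMk_left (measurable_mul hs))
    _ = ∫⁻ y, ∫⁻ x in s, chi3UnifJointDensity y x := by
        simp_rw [chi3PDFReal_mul_unif_preimage_const_mul _ s]
    _ = ∫⁻ x in s, ∫⁻ y, chi3UnifJointDensity y x :=
        lintegral_lintegral_swap measurable_chi3UnifJointDensity.aemeasurable
    _ = gaussianReal 0 1 s := by
        simp_rw [lintegral_chi3UnifJointDensity, gaussianReal_apply 0 one_ne_zero]

theorem khintchine_normal_general {Ω : Type*} [MeasureSpace Ω] (μ : Measure Ω)
    (Y U : Ω → ℝ) (hY : Measurable Y) (hU : Measurable U)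
    (hind : IndepFun Y U μ)
    (hYlaw : μ.map Y = chi3) (hUlaw : μ.map U = unif) :
    μ.map (fun ω => Y ω * U ω) = gaussianReal 0 1 :=
  (hind.hasLaw_fun_mul ⟨hY.aemeasurable, hYlaw⟩ ⟨hU.aemeasurable, hUlaw⟩).map_eq.trans
    chi3_mconv_unif

theorem khintchine_normal {Ω : Type*} [MeasureSpace Ω] (μ : Measure Ω) [IsProbabilityMeasure μ]
    (Y U : Ω → ℝ) (hY : Measurable Y) (hU : Measurable U)
    (hind : IndepFun Y U μ)
    (hYlaw : μ.map Y = chi3) (hUlaw : μ.map U = unif) :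
    μ.map (fun ω => Y ω * U ω) = gaussianReal 0 1 :=
  khintchine_normal_general μ Y U hY hU hind hYlaw hUlaw
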